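/- Define h(u) = E[X σ(X)] where X is a centered Gaussian random variable with standard deviation u, i.e. h(u) = u·E_{X'∼N(0,1)}[X' σ(uX')]. Then h is strictly increasing on (0, ∞). -/

import Mathlib

/-
For `x ≠ 0` the map `u ↦ x σ(ux)` is strictly increasing, since `σ` is; as the standard Gaussian
gives no mass to `{0}`, `g(u) = E[X σ(uX)]` is strictly increasing in `u`. Moreover
`g(0) = σ(0) E[X] = 0`, so `g > 0` on `(0, ∞)`, and `h(u) = u g(u)` is a product of two positive
strictly increasing functions there.
-/

open MeasureTheory ProbabilityTheory

/-- The sigmoid (logistic) function `σ(z) = 1 / (1 + e^{-z})`. -/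
noncomputable def sigmoid (z : ℝ) : ℝ := 1 / (1 + Real.exp (-z))

lemma sigmoid_eq_real_sigmoid : sigmoid = Real.sigmoid :=
  funext fun _ ↦ one_div _

lemma integral_lt_integral_of_le_of_lt_on {α : Type*} [MeasurableSpace α] {μ : Measure α}
    {f g : α → ℝ} (hf : Integrable f μ) (hg : Integrable g μ) (hle : f ≤ g) {s : Set α}
    (hs : μ s ≠ 0) (hlt : ∀ x ∈ s, f x < g x) : ∫ x, f x ∂μ < ∫ x, g x ∂μ := by
  rw [← sub_pos, ← integral_sub hg hf,
    integral_pos_iff_support_of_nonneg (fun x ↦ sub_nonneg.2 (hle x)) (hg.sub hf)]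
  refine (pos_iff_ne_zero.2 hs).trans_le (measure_mono fun x hx ↦ ?_)
  exact sub_ne_zero.2 (hlt x hx).ne'

section MulCompMul

variable {f : ℝ → ℝ} {u v x : ℝ}

lemma mul_comp_mul_lt_of_ne_zero (hf : StrictMono f) (huv : u < v) (hx : x ≠ 0) :
    x * f (u * x) < x * f (v * x) := by
  rcases hx.lt_or_gt with hx | hx
  · exact mul_lt_mul_of_neg_left (hf (mul_lt_mul_of_neg_right huv hx)) hx
  · exact mul_lt_mul_of_pos_left (hf (mul_lt_mul_of_pos_right huv hx)) hx

lemma mul_comp_mul_le (hf : StrictMono f) (huv : u < v) (x : ℝ) :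
    x * f (u * x) ≤ x * f (v * x) := by
  rcases eq_or_ne x 0 with rfl | hx
  · simp
  · exact (mul_comp_mul_lt_of_ne_zero hf huv hx).le

variable {μ : Measure ℝ} {C : ℝ}

lemma integrable_mul_comp_mul (hμ : Integrable id μ) (hf : Measurable f)
    (hfC : ∀ y, |f y| ≤ C) (u : ℝ) : Integrable (fun x ↦ x * f (u * x)) μ :=
  hμ.mul_bdd (hf.comp (measurable_const_mul u)).aestronglyMeasurable
    (ae_of_all _ fun x ↦ hfC (u * x))

lemma strictMono_integral_mul_comp_mul (hμ : Integrable id μ) (hμ₀ : μ {0}ᶜ ≠ 0)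
    (hf : StrictMono f) (hfC : ∀ y, |f y| ≤ C) :
    StrictMono fun u ↦ ∫ x, x * f (u * x) ∂μ := fun _ _ huv ↦
  integral_lt_integral_of_le_of_lt_on (integrable_mul_comp_mul hμ hf.monotone.measurable hfC _)
    (integrable_mul_comp_mul hμ hf.monotone.measurable hfC _) (mul_comp_mul_le hf huv) hμ₀
    fun _ hx ↦ mul_comp_mul_lt_of_ne_zero hf huv hx

lemma integral_mul_comp_mul_pos (hμ : Integrable id μ) (hμ₀ : μ {0}ᶜ ≠ 0)
    (hmean : ∫ x, x ∂μ = 0) (hf : StrictMono f) (hfC : ∀ y, |f y| ≤ C) (hu : 0 < u) :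
    0 < ∫ x, x * f (u * x) ∂μ := by
  have hzero : ∫ x, x * f (0 * x) ∂μ = 0 := by
    simp only [zero_mul, integral_mul_const, hmean]
  exact hzero ▸ strictMono_integral_mul_comp_mul hμ hμ₀ hf hfC hu

end MulCompMul

lemma integrable_id_gaussianReal : Integrable id (gaussianReal 0 1) :=
  memLp_one_iff_integrable.1 (memLp_id_gaussianReal 1)

lemma gaussianReal_compl_zero_ne_zero : gaussianReal 0 1 {0}ᶜ ≠ 0 := by
  have h0 : gaussianReal 0 1 {0} = 0 :=
    gaussianReal_absolutelyContinuous 0 one_ne_zero (by simp)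
  simp [h0]

lemma abs_sigmoid_le_one (y : ℝ) : |sigmoid y| ≤ 1 := by
  rw [sigmoid_eq_real_sigmoid, abs_of_pos (Real.sigmoid_pos y)]
  exact Real.sigmoid_le_one y

/-- The function `h(u) = E[X σ(X)]` for `X ~ N(0, u²)`, i.e.
`h(u) = u·E_{X'∼N(0,1)}[X' σ(uX')]`, is strictly increasing on `(0, ∞)`. -/
theorem gaussian_x_sigmoid_strictMonoOn :
    StrictMonoOn (fun u : ℝ => u * ∫ x, x * sigmoid (u * x) ∂(gaussianReal 0 1))
      (Set.Ioi (0 : ℝ)) := by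
  have hσ : StrictMono sigmoid := sigmoid_eq_real_sigmoid ▸ Real.sigmoid_strictMono
  have hmono := strictMono_integral_mul_comp_mul integrable_id_gaussianReal
    gaussianReal_compl_zero_ne_zero hσ abs_sigmoid_le_one
  intro u hu v _ huv
  have hpos := integral_mul_comp_mul_pos integrable_id_gaussianReal
    gaussianReal_compl_zero_ne_zero integral_id_gaussianReal hσ abs_sigmoid_le_one hu
  exact mul_lt_mul'' huv (hmono huv) hu.le hpos.le
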